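/- arXiv:2403.09119 — 6 statements merged into one kernel-verified Lean document; each statement's English description precedes it below -/
import Mathlib

section
/- In 3-valued Łukasiewicz logic, for all formulas A and B, A semantically entails B if and only if the formula ¬(A ⊃ ¬A) ⊃ B is valid. -/
inductive Fml where
  | var : ℕ → Fml
  | and : Fml → Fml → Fml
  | or : Fml → Fml → Fml
  | imp : Fml → Fml → Fml
  | neg : Fml → Fml

def val (v : ℕ → ℚ) : Fml → ℚ
  | .var n => v n
  | .and a b => min (val v a) (val v b)
  | .or a b => max (val v a) (val v b)
  | .imp a b => min 1 (1 - val v a + val v b)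
  | .neg a => 1 - val v a

/-- valuation into the 3 truth values of Ł₃ -/
def IsVal3 (v : ℕ → ℚ) : Prop := ∀ n, v n = 0 ∨ v n = 1/2 ∨ v n = 1

/-- valuation into the k truth values {i/(k-1) : 0 ≤ i ≤ k-1} of Ł_k -/
def IsValK (k : ℕ) (v : ℕ → ℚ) : Prop :=
  ∀ n, ∃ i : ℕ, i ≤ k - 1 ∧ v n = (i : ℚ) / (k - 1 : ℕ)

def Valid3 (A : Fml) : Prop := ∀ v, IsVal3 v → val v A = 1

def Entails3 (A B : Fml) : Prop := ∀ v, IsVal3 v → val v A = 1 → val v B = 1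

def ValidK (k : ℕ) (A : Fml) : Prop := ∀ v, IsValK k v → val v A = 1

def EntailsK (k : ℕ) (A B : Fml) : Prop :=
  ∀ v, IsValK k v → val v A = 1 → val v B = 1

/-- A ⊃ (A ⊃ ( … ⊃ (A ⊃ B)…)) with n antecedent occurrences of A -/
def impIter (A B : Fml) : ℕ → Fml
  | 0 => B
  | n + 1 => Fml.imp A (impIter A B n)

/-
The formula ¬(A ⊃ ¬A) takes the value max(0, 2a - 1) where a is the value of A; on the three
truth values this is 1 when a = 1 and 0 otherwise, so ¬(A ⊃ ¬A) ⊃ B has value 1 exactly when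
v(A) = 1 forces v(B) = 1.
-/

theorem val_imp_eq_one_iff (v : ℕ → ℚ) (A B : Fml) :
    val v (.imp A B) = 1 ↔ val v A ≤ val v B := by
  simp only [val, min_eq_left_iff]
  constructor <;> intro h <;> linarith

theorem val_neg_imp_neg_self (v : ℕ → ℚ) (A : Fml) :
    val v (.neg (.imp A (.neg A))) = max 0 (2 * val v A - 1) := by
  simp only [val]
  rw [← max_sub_sub_left, sub_self]
  congr 1
  ring

theorem IsVal3.val_eq {v : ℕ → ℚ} (hv : IsVal3 v) (A : Fml) :
    val v A = 0 ∨ val v A = 1 / 2 ∨ val v A = 1 := by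
  induction A with
  | var n => exact hv n
  | and A B ihA ihB | or A B ihA ihB | imp A B ihA ihB =>
    simp only [val]
    rcases ihA with hA | hA | hA <;> rcases ihB with hB | hB | hB <;> rw [hA, hB] <;> norm_num
  | neg A ihA =>
    simp only [val]
    rcases ihA with hA | hA | hA <;> rw [hA] <;> norm_num

theorem IsVal3.max_zero_two_mul_sub_one_le_iff {v : ℕ → ℚ} (hv : IsVal3 v) (A B : Fml) :
    max 0 (2 * val v A - 1) ≤ val v B ↔ (val v A = 1 → val v B = 1) := by
  rcases hv.val_eq A with hA | hA | hA <;> rcases hv.val_eq B with hB | hB | hB <;>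
    rw [hA, hB] <;> norm_num

theorem IsVal3.val_neg_imp_neg_self_imp_eq_one_iff {v : ℕ → ℚ} (hv : IsVal3 v) (A B : Fml) :
    val v (.imp (.neg (.imp A (.neg A))) B) = 1 ↔ (val v A = 1 → val v B = 1) := by
  rw [val_imp_eq_one_iff, val_neg_imp_neg_self, hv.max_zero_two_mul_sub_one_le_iff]

theorem stmt1 (A B : Fml) :
    Entails3 A B ↔ Valid3 (Fml.imp (Fml.neg (Fml.imp A (Fml.neg A))) B) :=
  forall_congr' fun _ => forall_congr' fun hv => (hv.val_neg_imp_neg_self_imp_eq_one_iff A B).symm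
end

section
/- In k-valued Łukasiewicz logic Ł_k (for finite k ≥ 2), for all formulas A and B, A semantically entails B if and only if the formula A ⊃ (A ⊃ (… ⊃ (A ⊃ B)…)) with k−1 antecedent occurrences of A is valid. -/
lemma mem_val (m : ℕ) (hm : 1 ≤ m) (v : ℕ → ℚ)
    (hv : ∀ n, ∃ i : ℕ, i ≤ m ∧ v n = (i : ℚ) / m) :
    ∀ C, ∃ i : ℕ, i ≤ m ∧ val v C = (i : ℚ) / m := by
  have hm0 : (0:ℚ) < (m:ℚ) := by exact_mod_cast hm
  intro C
  induction C with
  | var n => exact hv n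
  | and a b iha ihb =>
      obtain ⟨i, hi, ha⟩ := iha
      obtain ⟨j, hj, hb⟩ := ihb
      refine ⟨min i j, le_trans (min_le_left _ _) hi, ?_⟩
      simp only [val, ha, hb]
      rw [Nat.cast_min]
      exact min_div_div_right hm0.le _ _
  | or a b iha ihb =>
      obtain ⟨i, hi, ha⟩ := iha
      obtain ⟨j, hj, hb⟩ := ihb
      refine ⟨max i j, max_le hi hj, ?_⟩
      simp only [val, ha, hb]
      rw [Nat.cast_max]
      exact max_div_div_right hm0.le _ _
  | imp a b iha ihb =>
      obtain ⟨i, hi, ha⟩ := iha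
      obtain ⟨j, hj, hb⟩ := ihb
      simp only [val, ha, hb]
      rcases le_or_gt i j with h | h
      · refine ⟨m, le_refl m, ?_⟩
        have hij : (i:ℚ) ≤ (j:ℚ) := by exact_mod_cast h
        have hdiv : (i:ℚ)/m ≤ (j:ℚ)/m := by gcongr
        rw [min_eq_left (by linarith), div_self hm0.ne']
      · refine ⟨m - i + j, by omega, ?_⟩
        have hcast : ((m - i + j : ℕ) : ℚ) = (m:ℚ) - i + j := by
          push_cast [Nat.cast_sub hi]; ring
        have hle1 : 1 - (i:ℚ)/m + (j:ℚ)/m ≤ 1 := by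
          have hji : (j:ℚ) ≤ (i:ℚ) := by exact_mod_cast h.le
          have : (j:ℚ)/m ≤ (i:ℚ)/m := by gcongr
          linarith
        rw [min_eq_right hle1, hcast]
        field_simp
  | neg a iha =>
      obtain ⟨i, hi, ha⟩ := iha
      refine ⟨m - i, by omega, ?_⟩
      simp only [val, ha]
      rw [Nat.cast_sub hi]
      field_simp

theorem stmt2 (k : ℕ) (hk : 2 ≤ k) (A B : Fml) :
    EntailsK k A B ↔ ValidK k (impIter A B (k - 1)) := by
  set m := k - 1 with hmdef
  have hm : 1 ≤ m := by omega
  have hm0 : (0:ℚ) < (m:ℚ) := by exact_mod_cast hm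
  constructor
  · intro h v hv
    have memv := mem_val m hm v hv
    obtain ⟨i, hi, hA⟩ := memv A
    obtain ⟨j, hj, hB⟩ := memv B
    rcases eq_or_lt_of_le hi with heq | hlt
    · -- val v A = 1
      have hA1 : val v A = 1 := by rw [hA, heq, div_self hm0.ne']
      have hB1 : val v B = 1 := h v hv hA1
      have : ∀ n, val v (impIter A B n) = 1 := by
        intro n; induction n with
        | zero => exact hB1
        | succ n ih => simp [impIter, val, hA1, ih]
      exact this m
    · -- val v A < 1
      have hup : 1 - val v A ≥ 1 / m := by
        rw [hA]
        rw [ge_iff_le, div_le_iff₀ hm0]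
        have : (i:ℚ) ≤ (m:ℚ) - 1 := by
          have : (i:ℚ) + 1 ≤ m := by exact_mod_cast hlt
          linarith
        field_simp
        linarith
      have hB0 : 0 ≤ val v B := by
        rw [hB]; positivity
      have key : ∀ n : ℕ, min 1 ((n:ℚ)/m) ≤ val v (impIter A B n) := by
        intro n; induction n with
        | zero => simpa [impIter] using hB0
        | succ n ih =>
          simp only [impIter, val]
          have h1 : ((n:ℚ)+1)/m = (n:ℚ)/m + 1/m := by ring
          rcases le_total ((n:ℚ)/m) 1 with hc | hc
          · have : min 1 (((n:ℚ)+1)/m) ≤ 1 - val v A + val v (impIter A B n) := by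
              have := min_eq_right hc ▸ ih
              calc min 1 (((n:ℚ)+1)/m) ≤ ((n:ℚ)+1)/m := min_le_right _ _
                _ = (n:ℚ)/m + 1/m := h1
                _ ≤ val v (impIter A B n) + (1 - val v A) := by
                    have hn : (n:ℚ)/m ≤ val v (impIter A B n) := by
                      rw [min_eq_right hc] at ih; exact ih
                    linarith
                _ = 1 - val v A + val v (impIter A B n) := by ring
            push_cast
            exact le_min (min_le_left _ _) this
          · have : (1:ℚ) ≤ 1 - val v A + val v (impIter A B n) := by
              have hn : (1:ℚ) ≤ val v (impIter A B n) := by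
                rw [min_eq_left hc] at ih; exact ih
              linarith [le_trans (by norm_num : (0:ℚ) ≤ 1/(m:ℚ)) hup]
            push_cast
            exact le_min (min_le_left _ _) (le_trans (min_le_left _ _) this)
      have hle : val v (impIter A B m) ≤ 1 := by
        obtain ⟨i', hi', h'⟩ := memv (impIter A B m)
        rw [h', div_le_one hm0]
        exact_mod_cast hi'
      have := key m
      rw [div_self hm0.ne', min_self] at this
      linarith
  · intro h v hv hA1
    have memv := mem_val m hm v hv
    have down : ∀ n, val v (impIter A B n) = 1 → val v B = 1 := by
      intro n
      induction n with
      | zero => exact fun h => h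
      | succ n ih =>
        intro h1
        apply ih
        simp only [impIter, val, hA1] at h1
        have hle : val v (impIter A B n) ≤ 1 := by
          obtain ⟨i', hi', h'⟩ := memv (impIter A B n)
          rw [h', div_le_one hm0]
          exact_mod_cast hi'
        rcases le_total (1:ℚ) (1 - 1 + val v (impIter A B n)) with hc | hc
        · linarith
        · rw [min_eq_right hc] at h1; linarith
    exact down m (h v hv)
end

section
/- In k-valued Łukasiewicz logic Ł_k (for finite k ≥ 2), for all formulas A and B, A semantically entails B if and only if the formula ¬(A ⊃ (A ⊃ (… ⊃ (A ⊃ ¬A)…))) ⊃ B, where the antecedent contains k−1 nested implications with A, is valid. -/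
/-!
With `n = k - 1`, every formula takes a value `a` in `{0, 1/n, …, 1}`, and `A ⊃ⁿ ¬A` takes the
value `min 1 ((n + 1)(1 - a))`. Below `1` the grid has a gap of `1/n`, so this is `1` unless
`a = 1`: the antecedent `¬(A ⊃ⁿ ¬A)` is the crisp indicator of `v(A) = 1`, and an implication
with a `{0, 1}`-valued antecedent is true exactly when the antecedent being `1` forces the
consequent to be `1`.
-/

/-- The truth values of `Ł_(n+1)`; `IsValK k v` unfolds to `∀ m, OnGrid (k - 1) (v m)`. -/
def OnGrid (n : ℕ) (q : ℚ) : Prop := ∃ i : ℕ, i ≤ n ∧ q = i / n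

namespace OnGrid

variable {n : ℕ} {a b : ℚ}

theorem nonneg (ha : OnGrid n a) : 0 ≤ a := by
  obtain ⟨i, -, rfl⟩ := ha
  positivity

theorem le_one (ha : OnGrid n a) : a ≤ 1 := by
  obtain ⟨i, hi, rfl⟩ := ha
  exact div_le_one_of_le₀ (by exact_mod_cast hi) n.cast_nonneg

theorem min (ha : OnGrid n a) (hb : OnGrid n b) : OnGrid n (min a b) := by
  obtain ⟨i, hi, rfl⟩ := ha
  obtain ⟨j, hj, rfl⟩ := hb
  exact ⟨Min.min i j, by omega, by rw [Nat.cast_min, min_div_div_right n.cast_nonneg]⟩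

theorem max (ha : OnGrid n a) (hb : OnGrid n b) : OnGrid n (max a b) := by
  obtain ⟨i, hi, rfl⟩ := ha
  obtain ⟨j, hj, rfl⟩ := hb
  exact ⟨Max.max i j, by omega, by rw [Nat.cast_max, max_div_div_right n.cast_nonneg]⟩

theorem one_sub (hn : 0 < n) (ha : OnGrid n a) : OnGrid n (1 - a) := by
  obtain ⟨i, hi, rfl⟩ := ha
  have hn' : (n : ℚ) ≠ 0 := by positivity
  exact ⟨n - i, by omega, by rw [Nat.cast_sub hi, sub_div, div_self hn']⟩

theorem imp (hn : 0 < n) (ha : OnGrid n a) (hb : OnGrid n b) :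
    OnGrid n (Min.min 1 (1 - a + b)) := by
  obtain ⟨i, hi, rfl⟩ := ha
  obtain ⟨j, hj, rfl⟩ := hb
  have hn' : (n : ℚ) ≠ 0 := by positivity
  refine ⟨Min.min n (n - i + j), by omega, ?_⟩
  rw [Nat.cast_min, ← min_div_div_right n.cast_nonneg, div_self hn', Nat.cast_add,
    Nat.cast_sub hi, add_div, sub_div, div_self hn']

theorem one_le_mul_one_sub (hn : 0 < n) (ha : OnGrid n a) (ha1 : a ≠ 1) :
    1 ≤ n * (1 - a) := by
  obtain ⟨i, hi, rfl⟩ := ha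
  have hn' : (n : ℚ) ≠ 0 := by positivity
  have hin : i ≠ n := by rintro rfl; exact ha1 (div_self hn')
  have : (i : ℚ) + 1 ≤ n := by exact_mod_cast (show i + 1 ≤ n by omega)
  rw [mul_sub, mul_div_cancel₀ _ hn']
  linarith

end OnGrid

theorem val_onGrid {n : ℕ} (hn : 0 < n) {v : ℕ → ℚ} (hv : ∀ m, OnGrid n (v m)) :
    ∀ F : Fml, OnGrid n (val v F)
  | .var m => hv m
  | .and F G => (val_onGrid hn hv F).min (val_onGrid hn hv G)
  | .or F G => (val_onGrid hn hv F).max (val_onGrid hn hv G)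
  | .imp F G => (val_onGrid hn hv F).imp hn (val_onGrid hn hv G)
  | .neg F => (val_onGrid hn hv F).one_sub hn

theorem val_impIter_neg (v : ℕ → ℚ) (A : Fml) (h0 : 0 ≤ val v A) (h1 : val v A ≤ 1) (n : ℕ) :
    val v (impIter A (.neg A) n) = min 1 ((n + 1) * (1 - val v A)) := by
  induction n with
  | zero => simp [impIter, val, h0]
  | succ n ih =>
    simp only [impIter, val, ih]
    rcases le_total 1 ((n + 1) * (1 - val v A)) with h | h
    · rw [min_eq_left h, min_eq_left (by linarith), min_eq_left (by push_cast; nlinarith)]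
    · rw [min_eq_right h]
      push_cast
      ring_nf

theorem val_neg_impIter_neg {n : ℕ} (hn : 0 < n) {v : ℕ → ℚ} {A : Fml}
    (hA : OnGrid n (val v A)) :
    val v (.neg (impIter A (.neg A) n)) = if val v A = 1 then 1 else 0 := by
  rw [val, val_impIter_neg v A hA.nonneg hA.le_one]
  split_ifs with h1
  · simp [h1]
  · have hgap := hA.one_le_mul_one_sub hn h1
    have hge : 1 ≤ (n + 1) * (1 - val v A) := by nlinarith [hA.le_one]
    rw [min_eq_left hge, sub_self]

theorem stmt3 (k : ℕ) (hk : 2 ≤ k) (A B : Fml) :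
    EntailsK k A B ↔
      ValidK k (Fml.imp (Fml.neg (impIter A (Fml.neg A) (k - 1))) B) := by
  have hn : 0 < k - 1 := by omega
  refine forall₂_congr fun v (hv : ∀ m, OnGrid (k - 1) (v m)) => ?_
  have hB := val_onGrid hn hv B
  rw [val_imp_eq_one_iff, val_neg_impIter_neg hn (val_onGrid hn hv A)]
  split_ifs with hA
  · simp only [hA, forall_const]
    exact ⟨fun h => h.ge, fun h => le_antisymm hB.le_one h⟩
  · simp only [hA, false_imp_iff, hB.nonneg]
end

section
/- In k-valued Łukasiewicz logic, for every valuation v and formula A: v(¬(A ⊃ (A ⊃ (… ⊃ (A ⊃ ¬A)…)))) = 1 (with k−1 antecedent occurrences of A) if and only if v(A) = 1. -/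
lemma val_bounds (k : ℕ) (v : ℕ → ℚ) (hv : IsValK k v) (A : Fml) :
    0 ≤ val v A ∧ val v A ≤ 1 := by
  induction A with
  | var n =>
      obtain ⟨i, hi, hvi⟩ := hv n
      simp only [val]
      rw [hvi]
      rcases Nat.eq_zero_or_pos (k - 1) with h0 | hpos
      · simp [h0]
      constructor
      · positivity
      · rw [div_le_one (by exact_mod_cast hpos)]
        exact_mod_cast hi
  | and a b ha hb => simp [val]; constructor <;> [exact ⟨ha.1, hb.1⟩; exact Or.inl ha.2]
  | or a b ha hb => simp [val]; constructor <;> [exact Or.inl ha.1; exact ⟨ha.2, hb.2⟩]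
  | imp a b ha hb =>
      simp only [val]
      refine ⟨le_min (by norm_num) ?_, min_le_left _ _⟩
      linarith [ha.2, hb.1]
  | neg a ha => simp [val]; constructor <;> linarith [ha.1, ha.2]

lemma val_impIter (k : ℕ) (v : ℕ → ℚ) (hv : IsValK k v) (A : Fml) (n : ℕ) :
    val v (impIter A (Fml.neg A) n) = min 1 ((n + 1) * (1 - val v A)) := by
  obtain ⟨h0, h1⟩ := val_bounds k v hv A
  induction n with
  | zero => simp [impIter, val]; linarith
  | succ n ih =>
      rw [impIter, val, ih]
      rcases le_or_gt ((n + 1 : ℚ) * (1 - val v A)) 1 with h | h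
      · rw [min_eq_right h]
        push_cast
        ring_nf
      · rw [min_eq_left h.le, min_eq_left (by linarith), min_eq_left (by push_cast; nlinarith)]
      
theorem stmt16 (k : ℕ) (hk : 2 ≤ k) (v : ℕ → ℚ) (hv : IsValK k v) (A : Fml) :
    val v (Fml.neg (impIter A (Fml.neg A) (k - 1))) = 1 ↔ val v A = 1 := by
  obtain ⟨h0, h1⟩ := val_bounds k v hv A
  rw [val, val_impIter k v hv]
  have hk1 : (1 : ℚ) ≤ (k - 1 : ℕ) + 1 := by
    have : (0:ℚ) ≤ (k - 1 : ℕ) := Nat.cast_nonneg _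
    linarith
  constructor
  · intro h
    have hmin : min 1 (((k - 1 : ℕ) + 1) * (1 - val v A)) = 0 := by linarith
    rcases min_eq_iff.mp hmin with ⟨h', _⟩ | ⟨h', _⟩
    · linarith
    · nlinarith
  · intro h
    rw [h]
    simp
end

section
/- The rule ⊃₄ of Tamminga's natural deduction is semantically valid in Ł₃: for every valuation v, if v(¬B)=1 and v((A⊃B) ∨ ¬(A⊃B))=1, then v(A ∨ ¬A)=1. -/
lemma val3_mem (v : ℕ → ℚ) (hv : IsVal3 v) (C : Fml) :
    val v C = 0 ∨ val v C = 1/2 ∨ val v C = 1 := by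
  induction C with
  | var n => exact hv n
  | and a b ha hb =>
    simp only [val]
    rcases ha with h|h|h <;> rcases hb with h'|h'|h' <;> rw [h, h'] <;> norm_num
  | or a b ha hb =>
    simp only [val]
    rcases ha with h|h|h <;> rcases hb with h'|h'|h' <;> rw [h, h'] <;> norm_num
  | imp a b ha hb =>
    simp only [val]
    rcases ha with h|h|h <;> rcases hb with h'|h'|h' <;> rw [h, h'] <;> norm_num
  | neg a ha =>
    simp only [val]
    rcases ha with h|h|h <;> rw [h] <;> norm_num

theorem stmt18 (v : ℕ → ℚ) (hv : IsVal3 v) (A B : Fml)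
    (h1 : val v (Fml.neg B) = 1)
    (h2 : val v (Fml.or (Fml.imp A B) (Fml.neg (Fml.imp A B))) = 1) :
    val v (Fml.or A (Fml.neg A)) = 1 := by
  simp only [val] at h1 h2 ⊢
  have hB : val v B = 0 := by linarith
  rcases val3_mem v hv A with h|h|h
  · rw [h]; norm_num [min_def, max_def]
  · rw [h, hB] at h2; norm_num [min_def, max_def] at h2
  · rw [h]; norm_num [min_def, max_def]
end

section
/- The hypersequent mix rule M is semantically sound for Ł₃ under Avron's interpretation: if the translations of the two premise hypersequents G | Γ₁,Γ₂,Γ₃ ⇒ Δ₁,Δ₂,Δ₃ and G | Γ′₁,Γ′₂,Γ′₃ ⇒ Δ′₁,Δ′₂,Δ′₃ are valid, then so is the translation of the conclusion G | Γ₁,Γ′₁ ⇒ Δ₁,Δ′₁ | Γ₂,Γ′₂ ⇒ Δ₂,Δ′₂ | Γ₃,Γ′₃ ⇒ Δ₃,Δ′₃, where a component A₁,…,A_k ⇒ B₁,…,B_l translates to A₁⊃(…⊃(A_k⊃(¬B₁⊃(…⊃(¬B_{l−1}⊃B_l))))) and a hypersequent translates to the right-associated disjunction of its component translations. -/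
/-- a fixed `false` formula, used to translate an empty succedent -/
def fbot : Fml := Fml.neg (Fml.imp (Fml.var 0) (Fml.var 0))

/-- translation of a succedent B₁,…,B_l into ¬B₁⊃(…⊃(¬B_{l-1}⊃B_l)) -/
def succTr : List Fml → Fml
  | [] => fbot
  | [B] => B
  | B :: Bs => Fml.imp (Fml.neg B) (succTr Bs)

/-- translation of a component Γ ⇒ Δ -/
def compTr (c : List Fml × List Fml) : Fml :=
  c.1.foldr Fml.imp (succTr c.2)

/-- translation of a hypersequent: right-associated disjunction of components -/
def hypTr : List (List Fml × List Fml) → Fml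
  | [] => fbot
  | [c] => compTr c
  | c :: cs => Fml.or (compTr c) (hypTr cs)

def HypValid3 (H : List (List Fml × List Fml)) : Prop :=
  ∀ v, IsVal3 v → val v (hypTr H) = 1

namespace Stmt19Aux

lemma val3_cases (v : ℕ → ℚ) (hv : IsVal3 v) (A : Fml) :
    val v A = 0 ∨ val v A = 1/2 ∨ val v A = 1 := by
  induction A with
  | var n => exact hv n
  | and a b iha ihb =>
      rcases iha with h|h|h <;> rcases ihb with h'|h'|h' <;>
        simp [val, h, h', min_def] <;> norm_num
  | or a b iha ihb =>
      rcases iha with h|h|h <;> rcases ihb with h'|h'|h' <;>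
        simp [val, h, h', max_def] <;> norm_num
  | imp a b iha ihb =>
      rcases iha with h|h|h <;> rcases ihb with h'|h'|h' <;>
        simp [val, h, h', min_def] <;> norm_num
  | neg a iha =>
      rcases iha with h|h|h <;> simp [val, h] <;> norm_num

lemma val_nonneg (v : ℕ → ℚ) (hv : IsVal3 v) (A : Fml) : 0 ≤ val v A := by
  rcases val3_cases v hv A with h|h|h <;> rw [h] <;> norm_num

lemma val_le_one (v : ℕ → ℚ) (hv : IsVal3 v) (A : Fml) : val v A ≤ 1 := by
  rcases val3_cases v hv A with h|h|h <;> rw [h] <;> norm_num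

/-- the numeric value of a component -/
def fc (v : ℕ → ℚ) (c : List Fml × List Fml) : ℚ :=
  (c.1.map (fun A => 1 - val v A)).sum + (c.2.map (val v)).sum

lemma val_fbot (v : ℕ → ℚ) : val v fbot = 0 := by
  simp [fbot, val]

lemma succTr_val (v : ℕ → ℚ) (hv : IsVal3 v) (Δ : List Fml) :
    val v (succTr Δ) = min 1 ((Δ.map (val v)).sum) := by
  induction Δ with
  | nil => simp [succTr, val_fbot]
  | cons B Bs ih =>
      cases Bs with
      | nil =>
          simp [succTr, min_eq_right (val_le_one v hv B)]
      | cons C Cs =>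
          have hb : 0 ≤ val v B := val_nonneg v hv B
          show val v (Fml.imp (Fml.neg B) (succTr (C :: Cs))) = _
          rw [show val v (Fml.imp (Fml.neg B) (succTr (C :: Cs)))
              = min 1 (1 - (1 - val v B) + val v (succTr (C :: Cs))) from rfl, ih]
          rcases le_total ((List.map (val v) (C :: Cs)).sum) 1 with h|h
          · rw [min_eq_right h]
            simp only [List.map_cons, List.sum_cons]
            ring_nf
          · rw [min_eq_left h]
            simp only [List.map_cons, List.sum_cons] at h ⊢
            rw [min_eq_left (by linarith), min_eq_left (by linarith)]

lemma compTr_val (v : ℕ → ℚ) (hv : IsVal3 v) (c : List Fml × List Fml) :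
    val v (compTr c) = min 1 (fc v c) := by
  obtain ⟨Γ, Δ⟩ := c
  unfold compTr fc
  simp only
  induction Γ with
  | nil => simpa using succTr_val v hv Δ
  | cons A Γ ih =>
      have ha : val v A ≤ 1 := val_le_one v hv A
      show min 1 (1 - val v A + val v (Γ.foldr Fml.imp (succTr Δ))) = _
      rw [ih]
      rcases le_total ((Γ.map (fun A => 1 - val v A)).sum + (Δ.map (val v)).sum) 1 with h|h
      · rw [min_eq_right h]
        simp only [List.map_cons, List.sum_cons]
        ring_nf
      · rw [min_eq_left h]
        simp only [List.map_cons, List.sum_cons] at h ⊢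
        rw [min_eq_left (by linarith), min_eq_left (by linarith)]

lemma hypTr_le_one (v : ℕ → ℚ) (hv : IsVal3 v) (H : List (List Fml × List Fml)) :
    val v (hypTr H) ≤ 1 := by
  induction H with
  | nil => simp [hypTr, val_fbot]
  | cons c cs ih =>
      cases cs with
      | nil => rw [show hypTr [c] = compTr c from rfl, compTr_val v hv]; exact min_le_left _ _
      | cons d ds =>
          show max (val v (compTr c)) (val v (hypTr (d :: ds))) ≤ 1
          exact max_le (by rw [compTr_val v hv]; exact min_le_left _ _) ih

lemma hypTr_eq_one_iff (v : ℕ → ℚ) (hv : IsVal3 v) (H : List (List Fml × List Fml)) :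
    val v (hypTr H) = 1 ↔ ∃ c ∈ H, 1 ≤ fc v c := by
  induction H with
  | nil => simp [hypTr, val_fbot]
  | cons c cs ih =>
      cases cs with
      | nil =>
          rw [show hypTr [c] = compTr c from rfl, compTr_val v hv]
          simp [min_eq_left_iff, le_antisymm_iff, min_le_left]
      | cons d ds =>
          have h1 : val v (hypTr (c :: d :: ds))
              = max (val v (compTr c)) (val v (hypTr (d :: ds))) := rfl
          rw [h1]
          constructor
          · intro h
            rcases max_eq_iff.mp h with ⟨h', _⟩ | ⟨h', _⟩
            · rw [compTr_val v hv] at h'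
              exact ⟨c, by simp, by
                rcases min_eq_iff.mp h' with ⟨_, h₂⟩ | ⟨h₂, _⟩
                · exact h₂
                · exact h₂.ge⟩
            · obtain ⟨e, he, hfe⟩ := (ih).mp h'
              exact ⟨e, by simp [he], hfe⟩
          · rintro ⟨e, he, hfe⟩
            rcases List.mem_cons.mp he with rfl | he'
            · have : val v (compTr e) = 1 := by
                rw [compTr_val v hv, min_eq_left hfe]
              rw [this, max_eq_left_iff.mpr (hypTr_le_one v hv _)]
            · have : val v (hypTr (d :: ds)) = 1 := ih.mpr ⟨e, he', hfe⟩
              rw [this, max_eq_right_iff.mpr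
                (by rw [compTr_val v hv]; exact min_le_left _ _)]

def Dyadic2 (x : ℚ) : Prop := ∃ n : ℤ, x = n / 2

lemma dyadic_val (v : ℕ → ℚ) (hv : IsVal3 v) (A : Fml) : Dyadic2 (val v A) := by
  rcases val3_cases v hv A with h|h|h
  · exact ⟨0, by rw [h]; norm_num⟩
  · exact ⟨1, by rw [h]; norm_num⟩
  · exact ⟨2, by rw [h]; norm_num⟩

lemma dyadic_sum (l : List ℚ) (h : ∀ x ∈ l, Dyadic2 x) : Dyadic2 l.sum := by
  induction l with
  | nil => exact ⟨0, by norm_num⟩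
  | cons a l ih =>
      obtain ⟨n, hn⟩ := h a (by simp)
      obtain ⟨m, hm⟩ := ih (fun x hx => h x (by simp [hx]))
      exact ⟨n + m, by push_cast [List.sum_cons, hn, hm]; ring⟩

lemma dyadic_fc (v : ℕ → ℚ) (hv : IsVal3 v) (c : List Fml × List Fml) :
    Dyadic2 (fc v c) := by
  obtain ⟨n, hn⟩ := dyadic_sum (c.1.map (fun A => 1 - val v A)) (by
    intro x hx
    obtain ⟨A, _, rfl⟩ := List.mem_map.mp hx
    obtain ⟨m, hm⟩ := dyadic_val v hv A
    exact ⟨2 - m, by push_cast [hm]; ring⟩)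
  obtain ⟨m, hm⟩ := dyadic_sum (c.2.map (val v)) (by
    intro x hx
    obtain ⟨A, _, rfl⟩ := List.mem_map.mp hx
    exact dyadic_val v hv A)
  exact ⟨n + m, by push_cast [fc, hn, hm]; ring⟩

lemma dyadic_lt_one (x : ℚ) (h : Dyadic2 x) (hx : x < 1) : x ≤ 1/2 := by
  obtain ⟨n, rfl⟩ := h
  have : n < 2 := by
    by_contra hc
    push_neg at hc
    have : (2 : ℚ) ≤ n := by exact_mod_cast hc
    linarith
  have : n ≤ 1 := by omega
  have : (n : ℚ) ≤ 1 := by exact_mod_cast this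
  linarith

lemma fc_append (v : ℕ → ℚ) (Γ Γ' Δ Δ' : List Fml) :
    fc v (Γ ++ Γ', Δ ++ Δ') = fc v (Γ, Δ) + fc v (Γ', Δ') := by
  simp [fc, List.map_append, List.sum_append]
  ring

end Stmt19Aux

open Stmt19Aux in
theorem stmt19 (G : List (List Fml × List Fml))
    (Γ₁ Γ₂ Γ₃ Γ₁' Γ₂' Γ₃' Δ₁ Δ₂ Δ₃ Δ₁' Δ₂' Δ₃' : List Fml)
    (h1 : HypValid3 (G ++ [(Γ₁ ++ Γ₂ ++ Γ₃, Δ₁ ++ Δ₂ ++ Δ₃)]))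
    (h2 : HypValid3 (G ++ [(Γ₁' ++ Γ₂' ++ Γ₃', Δ₁' ++ Δ₂' ++ Δ₃')])) :
    HypValid3 (G ++
      [(Γ₁ ++ Γ₁', Δ₁ ++ Δ₁'), (Γ₂ ++ Γ₂', Δ₂ ++ Δ₂'), (Γ₃ ++ Γ₃', Δ₃ ++ Δ₃')]) := by
  intro v hv
  rw [hypTr_eq_one_iff v hv]
  have H1 := (hypTr_eq_one_iff v hv _).mp (h1 v hv)
  have H2 := (hypTr_eq_one_iff v hv _).mp (h2 v hv)
  simp only [List.mem_append, List.mem_singleton] at H1 H2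
  obtain ⟨c, hc, hfc⟩ := H1
  rcases hc with hc | rfl
  · exact ⟨c, by simp [hc], hfc⟩
  obtain ⟨d, hd, hfd⟩ := H2
  rcases hd with hd | rfl
  · exact ⟨d, by simp [hd], hfd⟩
  have hs : fc v (Γ₁, Δ₁) + fc v (Γ₂, Δ₂) + fc v (Γ₃, Δ₃) ≥ 1 := by
    have e1 : (Γ₁ ++ Γ₂ ++ Γ₃, Δ₁ ++ Δ₂ ++ Δ₃)
        = ((Γ₁ ++ Γ₂) ++ Γ₃, (Δ₁ ++ Δ₂) ++ Δ₃) := by simp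
    rw [e1, fc_append, fc_append] at hfc
    linarith
  have ht : fc v (Γ₁', Δ₁') + fc v (Γ₂', Δ₂') + fc v (Γ₃', Δ₃') ≥ 1 := by
    have e1 : (Γ₁' ++ Γ₂' ++ Γ₃', Δ₁' ++ Δ₂' ++ Δ₃')
        = ((Γ₁' ++ Γ₂') ++ Γ₃', (Δ₁' ++ Δ₂') ++ Δ₃') := by simp
    rw [e1, fc_append, fc_append] at hfd
    linarith
  have key : 1 ≤ fc v (Γ₁, Δ₁) + fc v (Γ₁', Δ₁')
      ∨ 1 ≤ fc v (Γ₂, Δ₂) + fc v (Γ₂', Δ₂')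
      ∨ 1 ≤ fc v (Γ₃, Δ₃) + fc v (Γ₃', Δ₃') := by
    by_contra hcon
    push_neg at hcon
    obtain ⟨k1, k2, k3⟩ := hcon
    have d1 : fc v (Γ₁, Δ₁) + fc v (Γ₁', Δ₁') ≤ 1/2 := by
      apply dyadic_lt_one _ _ k1
      obtain ⟨n, hn⟩ := dyadic_fc v hv (Γ₁, Δ₁)
      obtain ⟨m, hm⟩ := dyadic_fc v hv (Γ₁', Δ₁')
      exact ⟨n + m, by push_cast [hn, hm]; ring⟩
    have d2 : fc v (Γ₂, Δ₂) + fc v (Γ₂', Δ₂') ≤ 1/2 := by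
      apply dyadic_lt_one _ _ k2
      obtain ⟨n, hn⟩ := dyadic_fc v hv (Γ₂, Δ₂)
      obtain ⟨m, hm⟩ := dyadic_fc v hv (Γ₂', Δ₂')
      exact ⟨n + m, by push_cast [hn, hm]; ring⟩
    have d3 : fc v (Γ₃, Δ₃) + fc v (Γ₃', Δ₃') ≤ 1/2 := by
      apply dyadic_lt_one _ _ k3
      obtain ⟨n, hn⟩ := dyadic_fc v hv (Γ₃, Δ₃)
      obtain ⟨m, hm⟩ := dyadic_fc v hv (Γ₃', Δ₃')
      exact ⟨n + m, by push_cast [hn, hm]; ring⟩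
    linarith
  rcases key with k | k | k
  · exact ⟨(Γ₁ ++ Γ₁', Δ₁ ++ Δ₁'), by simp, by rw [fc_append]; exact k⟩
  · exact ⟨(Γ₂ ++ Γ₂', Δ₂ ++ Δ₂'), by simp, by rw [fc_append]; exact k⟩
  · exact ⟨(Γ₃ ++ Γ₃', Δ₃ ++ Δ₃'), by simp, by rw [fc_append]; exact k⟩
end
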